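/- arXiv:2404.08074 — 2 statements merged into one kernel-verified Lean document; each statement's English description precedes it below -/
import Mathlib

section
/- For β ∈ (0,1) define f(ζ;β) := ζ + (8/π)·tan²(πβ/2)·sinh(πζ/2)/( cos(πβ/2) + cosh(πζ/2) ). Then there exists ξ ∈ ℝ with Re ∂_ζ f(ξ + i; β) < 0 if and only if β > arccos(1 − √2)/π. -/
open Set

/-- The conformal map of the explicit zero-gravity solitary wave of
Crowdy–Nelson–Krishnamurthy. -/
noncomputable def fCNK (β : ℝ) (z : ℂ) : ℂ :=
  z + ((8 / Real.pi * Real.tan (Real.pi * β / 2) ^ 2 : ℝ) : ℂ) *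
    Complex.sinh ((Real.pi : ℂ) * z / 2) /
      (((Real.cos (Real.pi * β / 2) : ℝ) : ℂ) + Complex.cosh ((Real.pi : ℂ) * z / 2))

/-!
With `x = cos πβ` and `w = cosh πξ ≥ 1`, the identity `cosh (s + iπ/2) = i sinh s` turns
`Re ∂f(ξ + i; β)` into `1 + 8 (1 - x)/(1 + x) · (1 + x w)/(x + w)²`. Multiplied by
`(1 + x)² (x + w)²` this is `((1 + x)(x + w) + 4x(1 - x))² - 8 (1 - x)² (x² - 2x - 1)`, a square
minus a constant, and the square vanishes at some `w ≥ 1` as soon as the constant is positive.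
So the surface overhangs exactly when `x² - 2x - 1 > 0`, i.e. when `cos πβ < 1 - √2`.
-/

theorem Complex.hasDerivAt_sinh_div_add_cosh {c z : ℂ} (h : c + cosh z ≠ 0) :
    HasDerivAt (fun z => sinh z / (c + cosh z)) ((1 + c * cosh z) / (c + cosh z) ^ 2) z := by
  refine ((hasDerivAt_sinh z).div ((hasDerivAt_cosh z).const_add c) h).congr_deriv ?_
  rw [← cosh_sq_sub_sinh_sq z]
  ring

theorem Complex.cosh_add_pi_div_two_mul_I (z : ℂ) :
    cosh (z + Real.pi / 2 * I) = sinh z * I := by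
  rw [cosh_add, cosh_mul_I, sinh_mul_I, ← ofReal_ofNat, ← ofReal_div, ← ofReal_cos,
    ← ofReal_sin, Real.cos_pi_div_two, Real.sin_pi_div_two]
  simp

open Complex in
theorem re_one_add_mul_div_sq (c S : ℝ) :
    ((1 + c * (S * I)) / (c + S * I) ^ 2).re =
      (c ^ 2 - S ^ 2 + 2 * c ^ 2 * S ^ 2) / (c ^ 2 + S ^ 2) ^ 2 := by
  have hsq : ((c : ℂ) + S * I) ^ 2 = (c ^ 2 - S ^ 2 : ℝ) + (2 * c * S : ℝ) * I := by
    push_cast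
    linear_combination (S : ℂ) ^ 2 * I_sq
  rw [hsq, div_re, normSq_add_mul_I]
  simp only [add_re, add_im, one_re, one_im, ofReal_re, ofReal_im, mul_re,
    mul_im, I_re, I_im]
  ring

theorem hasDerivAt_fCNK {β : ℝ} {z : ℂ}
    (h : (Real.cos (Real.pi * β / 2) : ℂ) + Complex.cosh (Real.pi * z / 2) ≠ 0) :
    HasDerivAt (fCNK β)
      (1 + 4 * Real.tan (Real.pi * β / 2) ^ 2 *
        ((1 + Real.cos (Real.pi * β / 2) * Complex.cosh (Real.pi * z / 2)) /
          (Real.cos (Real.pi * β / 2) + Complex.cosh (Real.pi * z / 2)) ^ 2)) z := by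
  set c := Real.cos (Real.pi * β / 2)
  set t := Real.tan (Real.pi * β / 2)
  have hw : HasDerivAt (fun z : ℂ => Real.pi * z / 2) (Real.pi / 2) z := by
    simpa using ((hasDerivAt_id z).const_mul (Real.pi : ℂ)).div_const 2
  have hg := ((Complex.hasDerivAt_sinh_div_add_cosh h).comp z hw).const_mul
    ((8 / Real.pi * t ^ 2 : ℝ) : ℂ)
  have hf : fCNK β = fun w => w + ((8 / Real.pi * t ^ 2 : ℝ) : ℂ) *
      (Complex.sinh (Real.pi * w / 2) / (c + Complex.cosh (Real.pi * w / 2))) := by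
    funext w
    rw [fCNK, mul_div_assoc]
  have hπ : (Real.pi : ℂ) * (Real.pi : ℂ)⁻¹ = 1 :=
    mul_inv_cancel₀ (Complex.ofReal_ne_zero.2 Real.pi_ne_zero)
  rw [hf]
  refine ((hasDerivAt_id' z).add hg).congr_deriv ?_
  push_cast
  linear_combination (4 * (t : ℂ) ^ 2 * ((1 + c * Complex.cosh (Real.pi * z / 2)) /
    (c + Complex.cosh (Real.pi * z / 2)) ^ 2)) * hπ

noncomputable def horizontalSpeed (x w : ℝ) : ℝ :=
  1 + 8 * ((1 - x) / (1 + x)) * ((1 + x * w) / (x + w) ^ 2)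

theorem re_deriv_fCNK_add_I {β : ℝ} (hc : Real.cos (Real.pi * β / 2) ≠ 0) (ξ : ℝ) :
    (deriv (fCNK β) (ξ + Complex.I)).re =
      horizontalSpeed (Real.cos (Real.pi * β)) (Real.cosh (Real.pi * ξ)) := by
  have hcosh : Complex.cosh (Real.pi * (ξ + Complex.I) / 2) =
      Real.sinh (Real.pi * ξ / 2) * Complex.I := by
    rw [show (Real.pi : ℂ) * (ξ + Complex.I) / 2 = (Real.pi * ξ / 2 : ℝ) + Real.pi / 2 * Complex.I
      by push_cast; ring, Complex.cosh_add_pi_div_two_mul_I, Complex.ofReal_sinh]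
  have hne : (Real.cos (Real.pi * β / 2) : ℂ) + Complex.cosh (Real.pi * (ξ + Complex.I) / 2) ≠ 0 := by
    rw [hcosh]
    intro h
    apply hc
    simpa only [Complex.add_re, Complex.ofReal_re, Complex.re_ofReal_mul, Complex.I_re, mul_zero,
      add_zero, Complex.zero_re] using congrArg Complex.re h
  have hx : Real.cos (Real.pi * β) = 2 * Real.cos (Real.pi * β / 2) ^ 2 - 1 := by
    rw [← Real.cos_two_mul]; congr 1; ring
  have hw : Real.cosh (Real.pi * ξ) = 1 + 2 * Real.sinh (Real.pi * ξ / 2) ^ 2 := by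
    have h := Real.cosh_two_mul (Real.pi * ξ / 2)
    rw [show 2 * (Real.pi * ξ / 2) = Real.pi * ξ by ring, Real.cosh_sq] at h
    linarith
  have ht : Real.tan (Real.pi * β / 2) ^ 2 =
      (1 - Real.cos (Real.pi * β / 2) ^ 2) / Real.cos (Real.pi * β / 2) ^ 2 := by
    rw [Real.tan_eq_sin_div_cos, div_pow, Real.sin_sq]
  rw [(hasDerivAt_fCNK hne).deriv, hcosh, horizontalSpeed, hx, hw, Complex.add_re, Complex.one_re,
    ← Complex.ofReal_ofNat, ← Complex.ofReal_pow, ← Complex.ofReal_mul, Complex.re_ofReal_mul,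
    re_one_add_mul_div_sq, ht]
  generalize Real.cos (Real.pi * β / 2) = c at hc ⊢
  generalize Real.sinh (Real.pi * ξ / 2) = S
  rw [show 1 + (2 * c ^ 2 - 1) = 2 * c ^ 2 by ring,
    show 2 * c ^ 2 - 1 + (1 + 2 * S ^ 2) = 2 * (c ^ 2 + S ^ 2) by ring]
  have hcS : c ^ 2 + S ^ 2 ≠ 0 := by positivity
  field_simp
  ring

theorem sq_mul_sq_mul_horizontalSpeed {x w : ℝ} (hx : 1 + x ≠ 0) (hxw : x + w ≠ 0) :
    (1 + x) ^ 2 * (x + w) ^ 2 * horizontalSpeed x w =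
      ((1 + x) * (x + w) + 4 * x * (1 - x)) ^ 2 - 8 * (1 - x) ^ 2 * (x ^ 2 - 2 * x - 1) := by
  rw [horizontalSpeed]
  field_simp
  ring

theorem exists_horizontalSpeed_neg_iff {x : ℝ} (hx₀ : -1 < x) :
    (∃ w, 1 ≤ w ∧ horizontalSpeed x w < 0) ↔ 0 < x ^ 2 - 2 * x - 1 := by
  have hx : 1 + x ≠ 0 := by linarith
  constructor
  · rintro ⟨w, hw, hneg⟩
    have hxw : 0 < x + w := by linarith
    have h := sq_mul_sq_mul_horizontalSpeed hx hxw.ne'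
    have : (1 + x) ^ 2 * (x + w) ^ 2 * horizontalSpeed x w < 0 :=
      mul_neg_of_pos_of_neg (by positivity) hneg
    nlinarith [sq_nonneg ((1 + x) * (x + w) + 4 * x * (1 - x)), sq_nonneg (1 - x)]
  · intro hdisc
    set w := (3 * x ^ 2 - 5 * x) / (1 + x) with hw
    have hxw : (1 + x) * (x + w) + 4 * x * (1 - x) = 0 := by
      rw [hw]; field_simp; ring
    have hw₁ : 1 ≤ w := by
      rw [hw, le_div_iff₀ (by linarith)]
      nlinarith
    refine ⟨w, hw₁, neg_of_mul_neg_right (a := (1 + x) ^ 2 * (x + w) ^ 2) ?_ (by positivity)⟩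
    rw [sq_mul_sq_mul_horizontalSpeed hx (by linarith), hxw]
    have hx₁ : 1 - x ≠ 0 := fun h => by nlinarith
    nlinarith [sq_pos_of_ne_zero hx₁]

theorem sq_sub_two_mul_sub_one_pos_iff {x : ℝ} (hx : x < 1 + √2) :
    0 < x ^ 2 - 2 * x - 1 ↔ x < 1 - √2 := by
  have h2 := Real.sq_sqrt (zero_le_two (α := ℝ))
  have hfac : x ^ 2 - 2 * x - 1 = (1 + √2 - x) * (1 - √2 - x) := by linear_combination h2
  rw [hfac, mul_pos_iff_of_pos_left (sub_pos.2 hx), sub_pos]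

theorem Real.arccos_lt_iff_cos_lt {y t : ℝ} (hy₀ : -1 ≤ y) (hy₁ : y ≤ 1) (ht₀ : 0 ≤ t)
    (ht₁ : t ≤ Real.pi) : arccos y < t ↔ cos t < y := by
  conv_lhs => rw [← arccos_cos ht₀ ht₁]
  exact strictAntiOn_arccos.lt_iff_gt ⟨hy₀, hy₁⟩ ⟨neg_one_le_cos t, cos_le_one t⟩

theorem Real.exists_cosh_mul_iff {a : ℝ} (ha : a ≠ 0) {p : ℝ → Prop} :
    (∃ ξ, p (cosh (a * ξ))) ↔ ∃ w, 1 ≤ w ∧ p w :=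
  ⟨fun ⟨_, h⟩ => ⟨_, one_le_cosh _, h⟩, fun ⟨w, hw, h⟩ =>
    ⟨arcosh w / a, by rwa [mul_div_cancel₀ _ ha, cosh_arcosh hw]⟩⟩

theorem statement17 (β : ℝ) (hβ : β ∈ Ioo (0 : ℝ) 1) :
    (∃ ξ : ℝ, (deriv (fCNK β) ((ξ : ℂ) + Complex.I)).re < 0) ↔
      Real.arccos (1 - Real.sqrt 2) / Real.pi < β := by
  obtain ⟨hβ₀, hβ₁⟩ := hβ
  have hπβ₀ : 0 < Real.pi * β := by positivity
  have hπβ₁ : Real.pi * β < Real.pi := by nlinarith [Real.pi_pos]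
  have hc : Real.cos (Real.pi * β / 2) ≠ 0 :=
    (Real.cos_pos_of_mem_Ioo ⟨by linarith, by linarith⟩).ne'
  have hx₀ : -1 < Real.cos (Real.pi * β) := by
    simpa using Real.cos_lt_cos_of_nonneg_of_le_pi hπβ₀.le le_rfl hπβ₁
  have hx₁ : Real.cos (Real.pi * β) < 1 := by
    simpa using Real.cos_lt_cos_of_nonneg_of_le_pi le_rfl hπβ₁.le hπβ₀
  have hsqrt₂ : √2 ≤ 2 := by nlinarith [Real.sq_sqrt (zero_le_two (α := ℝ)), Real.sqrt_nonneg 2]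
  simp_rw [re_deriv_fCNK_add_I hc]
  rw [Real.exists_cosh_mul_iff (p := fun w => horizontalSpeed _ w < 0) Real.pi_ne_zero,
    exists_horizontalSpeed_neg_iff hx₀, sq_sub_two_mul_sub_one_pos_iff (by linarith [Real.sqrt_nonneg 2]),
    div_lt_iff₀ Real.pi_pos, mul_comm β Real.pi,
    Real.arccos_lt_iff_cos_lt (by linarith) (by linarith [Real.one_lt_sqrt_two]) hπβ₀.le hπβ₁.le]
end

section
/- For β ∈ (0,1) define f(ζ;β) := ζ + (8/π)·tan²(πβ/2)·sinh(πζ/2)/( cos(πβ/2) + cosh(πζ/2) ) and h(β) := (4/π)·tan²(πβ/2)·sec(πβ/2), and let Σ̃_β := { (f(ξ + i; β) − i)/h(β) : ξ ∈ ℝ } ⊂ ℂ denote the rescaled free surface. Then sup over z ∈ Σ̃_β of dist( z, C ∪ ℝ ) → 0 as β → 1⁻, where C := { z ∈ ℂ : |z − i| = 1 } is the unit circle centered at i and ℝ is the real axis in ℂ. -/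
/-!
Evaluating the conformal map on the upper boundary `ζ = ξ + i` turns `sinh` and `cosh` into
`i cosh t` and `i sinh t` (`t = πξ/2`), so with `c = cos(πβ/2)` the rescaled surface point is
`ξ/h + w`, where `w = 2ck i/(c + i s)` and `k = cosh t`, `s = sinh t`. An exact computation gives
`‖w - i‖² = 1 + 4c²k(k-1)/(c² + s²) ∈ [1, 1 + 4c²]`, so `w` lies within `2c²` of the circle,
while `Im w = 2c²k/(c² + s²) ≤ 2c²` once `k ≥ 2`. For bounded `ξ` the drift `ξ/h = O(c³)` is
negligible and the point is near the circle; for large `ξ` it is near the real axis. Both bounds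
vanish as `c = cos(πβ/2) → 0`.
-/

open Set

/-- The normalization `h(β) = (4/π)·tan²(πβ/2)·sec(πβ/2)`. -/
noncomputable def hCNK (β : ℝ) : ℝ :=
  4 / Real.pi * Real.tan (Real.pi * β / 2) ^ 2 / Real.cos (Real.pi * β / 2)

open Complex Metric Filter Topology
open scoped Real

theorem Metric.infDist_sphere_le_abs_norm_sub {E : Type*} [NormedAddCommGroup E]
    [NormedSpace ℝ E] {x z : E} {r : ℝ} (hr : 0 ≤ r) (hz : z ≠ x) :
    infDist z (sphere x r) ≤ |‖z - x‖ - r| := by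
  set d := ‖z - x‖
  have hd : 0 < d := norm_pos_iff.mpr (sub_ne_zero.mpr hz)
  have hmem : x + (r / d) • (z - x) ∈ sphere x r := by
    rw [mem_sphere_iff_norm, add_sub_cancel_left, norm_smul, Real.norm_eq_abs,
      abs_of_nonneg (by positivity), div_mul_cancel₀ _ hd.ne']
  have hsub : z - (x + (r / d) • (z - x)) = (1 - r / d) • (z - x) := by
    rw [sub_smul, one_smul]; abel
  calc infDist z (sphere x r) ≤ dist z (x + (r / d) • (z - x)) := infDist_le_dist_of_mem hmem
    _ = |(1 - r / d) * d| := by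
      rw [dist_eq_norm, hsub, norm_smul, Real.norm_eq_abs, abs_mul, abs_of_pos hd]
    _ = |d - r| := by rw [sub_mul, one_mul, div_mul_cancel₀ _ hd.ne']

theorem Complex.infDist_setOf_im_eq_zero_le (z : ℂ) : infDist z {w : ℂ | w.im = 0} ≤ |z.im| :=
  calc infDist z {w : ℂ | w.im = 0} ≤ dist z z.re := infDist_le_dist_of_mem (by simp)
    _ = |z.im| := by rw [dist_of_re_eq (by simp), Real.dist_eq]; simp

theorem Real.tan_sq_eq (x : ℝ) : Real.tan x ^ 2 = (1 - Real.cos x ^ 2) / Real.cos x ^ 2 := by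
  rw [Real.tan_eq_sin_div_cos, div_pow, Real.sin_sq]

theorem hCNK_eq (β : ℝ) :
    hCNK β = 4 * (1 - Real.cos (π * β / 2) ^ 2) / (π * Real.cos (π * β / 2) ^ 3) := by
  rw [hCNK, Real.tan_sq_eq]
  ring

theorem cos_pi_mul_div_two_mem_Ioo {β : ℝ} (hβ : β ∈ Ioo 0 1) :
    Real.cos (π * β / 2) ∈ Ioo 0 1 := by
  have hθ0 : 0 < π * β / 2 := by nlinarith [Real.pi_pos, hβ.1]
  have hθ1 : π * β / 2 < π / 2 := by nlinarith [Real.pi_pos, hβ.2]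
  exact ⟨Real.cos_pos_of_mem_Ioo ⟨by linarith, hθ1⟩,
    by simpa using Real.cos_lt_cos_of_nonneg_of_le_pi le_rfl (by linarith) hθ0⟩

theorem hCNK_pos {β : ℝ} (hβ : β ∈ Ioo 0 1) : 0 < hCNK β := by
  obtain ⟨hc0, hc1⟩ := cos_pi_mul_div_two_mem_Ioo hβ
  have : 0 < 1 - Real.cos (π * β / 2) ^ 2 := by nlinarith
  rw [hCNK_eq]
  positivity

theorem Real.abs_add_one_le_two_mul_cosh (t : ℝ) : |t| + 1 ≤ 2 * Real.cosh t := by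
  rw [← Real.cosh_abs, Real.cosh_eq]
  linarith [Real.add_one_le_exp |t|, Real.exp_pos (-|t|)]

noncomputable def cnkProfile (c t : ℝ) : ℂ :=
  2 * c * Real.cosh t * I / (c + Real.sinh t * I)

theorem cnkProfile_re (c t : ℝ) :
    (cnkProfile c t).re = 2 * c * Real.cosh t * Real.sinh t / (c ^ 2 + Real.sinh t ^ 2) := by
  simp only [cnkProfile, div_re, mul_re, re_ofNat, ofReal_re, im_ofNat, ofReal_im, mul_zero,
    sub_zero, mul_im, zero_mul, add_zero, I_re, I_im, mul_one, sub_self, add_re, normSq_apply,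
    add_im, zero_add, zero_div]
  ring

theorem cnkProfile_im (c t : ℝ) :
    (cnkProfile c t).im = 2 * c ^ 2 * Real.cosh t / (c ^ 2 + Real.sinh t ^ 2) := by
  simp only [cnkProfile, div_im, mul_im, mul_re, re_ofNat, ofReal_re, im_ofNat, ofReal_im,
    mul_zero, sub_zero, zero_mul, add_zero, I_im, mul_one, I_re, add_re, sub_self, normSq_apply,
    add_im, zero_add, zero_div]
  ring

theorem norm_cnkProfile_sub_I_sq {c : ℝ} (hc : c ≠ 0) (t : ℝ) :
    ‖cnkProfile c t - I‖ ^ 2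
      = 1 + 4 * c ^ 2 * Real.cosh t * (Real.cosh t - 1) / (c ^ 2 + Real.sinh t ^ 2) := by
  have hpos : 0 < c ^ 2 + Real.sinh t ^ 2 := by positivity
  rw [Complex.sq_norm, normSq_apply, sub_re, sub_im, cnkProfile_re, cnkProfile_im, I_re, I_im]
  field_simp
  ring

theorem infDist_cnkProfile_sphere_le {c : ℝ} (hc : c ≠ 0) (t : ℝ) :
    infDist (cnkProfile c t) (sphere I 1) ≤ 2 * c ^ 2 := by
  set n := ‖cnkProfile c t - I‖
  have hk := Real.one_le_cosh t
  have hpos : 0 < c ^ 2 + Real.sinh t ^ 2 := by positivity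
  have hD0 : 0 ≤ 4 * c ^ 2 * Real.cosh t * (Real.cosh t - 1) / (c ^ 2 + Real.sinh t ^ 2) := by
    have : 0 ≤ Real.cosh t - 1 := by linarith
    positivity
  have hD : 4 * c ^ 2 * Real.cosh t * (Real.cosh t - 1) / (c ^ 2 + Real.sinh t ^ 2)
      ≤ 4 * c ^ 2 := by
    have hks : Real.cosh t * (Real.cosh t - 1) ≤ Real.sinh t ^ 2 := by
      nlinarith [Real.cosh_sq t]
    rw [div_le_iff₀ hpos]
    nlinarith [mul_le_mul_of_nonneg_left hks (sq_nonneg c), sq_nonneg c]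
  have hn := norm_cnkProfile_sub_I_sq hc t
  have hn1 : 1 ≤ n := by nlinarith [norm_nonneg (cnkProfile c t - I)]
  have hn2 : n ≤ 1 + 2 * c ^ 2 := by nlinarith [sq_nonneg c]
  have hne : cnkProfile c t ≠ I := fun h => by norm_num [n, h] at hn1
  calc infDist (cnkProfile c t) (sphere I 1) ≤ |n - 1| :=
        infDist_sphere_le_abs_norm_sub zero_le_one hne
    _ ≤ 2 * c ^ 2 := by rw [abs_of_nonneg (by linarith)]; linarith

theorem cnkProfile_im_nonneg (c t : ℝ) : 0 ≤ (cnkProfile c t).im := by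
  rw [cnkProfile_im]
  have := Real.cosh_pos t
  positivity

theorem cnkProfile_im_le (c : ℝ) {t : ℝ} (ht : 2 ≤ Real.cosh t) :
    (cnkProfile c t).im ≤ 2 * c ^ 2 := by
  have hpos : 0 < c ^ 2 + Real.sinh t ^ 2 := by nlinarith [Real.cosh_sq t, sq_nonneg c]
  have hs : Real.cosh t ≤ Real.sinh t ^ 2 := by nlinarith [Real.cosh_sq t]
  rw [cnkProfile_im, div_le_iff₀ hpos]
  nlinarith [mul_le_mul_of_nonneg_left hs (sq_nonneg c), sq_nonneg c]

theorem fCNK_add_I_sub_I_div_hCNK {β : ℝ} (hβ : β ∈ Ioo 0 1) (ξ : ℝ) :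
    (fCNK β (ξ + I) - I) / hCNK β
      = ((ξ / hCNK β : ℝ) : ℂ) + cnkProfile (Real.cos (π * β / 2)) (π * ξ / 2) := by
  have hshift : (π : ℂ) * (ξ + I) / 2 = ((π * ξ / 2 : ℝ) : ℂ) + (π / 2 : ℝ) * I := by
    push_cast; ring
  have hsinh : Complex.sinh ((π : ℂ) * (ξ + I) / 2) = Real.cosh (π * ξ / 2) * I := by
    rw [hshift, Complex.sinh_add, sinh_mul_I, cosh_mul_I, ← ofReal_cos, ← ofReal_sin,
      Real.cos_pi_div_two, Real.sin_pi_div_two]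
    push_cast; ring
  have hcosh : Complex.cosh ((π : ℂ) * (ξ + I) / 2) = Real.sinh (π * ξ / 2) * I := by
    rw [hshift, Complex.cosh_add, sinh_mul_I, cosh_mul_I, ← ofReal_cos, ← ofReal_sin,
      Real.cos_pi_div_two, Real.sin_pi_div_two]
    push_cast; ring
  obtain ⟨hc, hc1⟩ := cos_pi_mul_div_two_mem_Ioo hβ
  have hs : 0 < 1 - Real.cos (π * β / 2) ^ 2 := by nlinarith
  rw [fCNK, hsinh, hcosh, hCNK_eq, Real.tan_sq_eq, cnkProfile]
  generalize Real.cos (π * β / 2) = c at hc hs ⊢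
  generalize Real.sinh (π * ξ / 2) = s
  have hden : (c : ℂ) + s * I ≠ 0 := fun h => by simpa [hc.ne'] using congrArg re h
  have hcC : (c : ℂ) ≠ 0 := ofReal_ne_zero.mpr hc.ne'
  have hsC : (1 : ℂ) - (c : ℂ) ^ 2 ≠ 0 := by exact_mod_cast hs.ne'
  have hπ : (π : ℂ) ≠ 0 := ofReal_ne_zero.mpr Real.pi_ne_zero
  push_cast
  field_simp
  ring

theorem infDist_rescaled_surface_le {β : ℝ} (hβ : β ∈ Ioo 0 1) (ξ : ℝ) :
    infDist ((fCNK β (ξ + I) - I) / hCNK β) (sphere I 1 ∪ {z : ℂ | z.im = 0})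
      ≤ 2 * Real.cos (π * β / 2) ^ 2 + 2 / hCNK β := by
  have hc := (cos_pi_mul_div_two_mem_Ioo hβ).1
  have hh := hCNK_pos hβ
  rw [fCNK_add_I_sub_I_div_hCNK hβ]
  set c := Real.cos (π * β / 2)
  set t := π * ξ / 2
  set w := cnkProfile c t
  rcases le_or_gt |ξ| 2 with hξ | hξ
  · have hdrift : dist ((ξ / hCNK β : ℝ) + w) w ≤ 2 / hCNK β := by
      rw [dist_eq_norm, add_sub_cancel_right, norm_real, Real.norm_eq_abs, abs_div,
        abs_of_pos hh]
      gcongr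
    calc _ ≤ infDist ((ξ / hCNK β : ℝ) + w) (sphere I 1) :=
          infDist_le_infDist_of_subset subset_union_left ⟨0, by simp⟩
      _ ≤ infDist w (sphere I 1) + dist ((ξ / hCNK β : ℝ) + w) w := infDist_le_infDist_add_dist
      _ ≤ 2 * c ^ 2 + 2 / hCNK β := add_le_add (infDist_cnkProfile_sphere_le hc.ne' t) hdrift
  · have ht : 2 ≤ Real.cosh t := by
      have : 3 ≤ |t| := by
        rw [abs_div, abs_mul, abs_of_pos Real.pi_pos, abs_two]
        nlinarith [Real.pi_gt_three]
      linarith [Real.abs_add_one_le_two_mul_cosh t]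
    calc _ ≤ infDist ((ξ / hCNK β : ℝ) + w) {z : ℂ | z.im = 0} :=
          infDist_le_infDist_of_subset subset_union_right ⟨0, by simp⟩
      _ ≤ |w.im| := (infDist_setOf_im_eq_zero_le _).trans_eq (by simp)
      _ = w.im := abs_of_nonneg (cnkProfile_im_nonneg c t)
      _ ≤ 2 * c ^ 2 := cnkProfile_im_le c ht
      _ ≤ 2 * c ^ 2 + 2 / hCNK β := le_add_of_nonneg_right (by positivity)

theorem tendsto_cos_sq_add_two_div_hCNK_nhds_one :
    Tendsto (fun β : ℝ => 2 * Real.cos (π * β / 2) ^ 2 + 2 / hCNK β) (𝓝 1) (𝓝 0) := by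
  have hcont : ContinuousAt (fun β : ℝ => 2 * Real.cos (π * β / 2) ^ 2 +
      2 * (π * Real.cos (π * β / 2) ^ 3) / (4 * (1 - Real.cos (π * β / 2) ^ 2))) 1 := by
    fun_prop (disch := simp)
  -- `hCNK β → ∞` at `β = 1`; written as `2πc³/(4(1 - c²))` the bound is continuous there.
  simp_rw [hCNK_eq, div_div_eq_mul_div]
  simpa using hcont.tendsto

theorem statement19 :
    ∀ ε > 0, ∃ δ > 0, ∀ β ∈ Set.Ioo (0 : ℝ) 1, 1 - δ < β →
      ∀ ξ : ℝ,
        Metric.infDist ((fCNK β ((ξ : ℂ) + Complex.I) - Complex.I) / ((hCNK β : ℝ) : ℂ))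
          (Metric.sphere (Complex.I) 1 ∪ {z : ℂ | z.im = 0}) < ε := by
  intro ε hε
  obtain ⟨δ, hδ, hbound⟩ :=
    Metric.tendsto_nhds_nhds.mp tendsto_cos_sq_add_two_div_hCNK_nhds_one ε hε
  refine ⟨δ, hδ, fun β hβ hβδ ξ => (infDist_rescaled_surface_le hβ ξ).trans_lt ?_⟩
  have hdist : dist β 1 < δ := by
    rw [Real.dist_eq, abs_sub_comm, abs_of_pos (by linarith [hβ.2])]
    linarith
  have hlt := hbound hdist
  rw [Real.dist_eq, sub_zero] at hlt
  exact (abs_lt.mp hlt).2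
end
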